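/- Let W be a Krein-selfadjoint operator on H, B ∈ L(H) with closed range decomposed as B = B₊ + B₋ as in the context, and suppose W is range(B)-complementable, witnessed by a projection Q ∈ L(H) with range(Q) = range(B) and W ∘ Q = Q^# ∘ W. Then for every C ∈ L(H): (a) for each Y ∈ L(H) the family {F_J(X,Y) : X ∈ L(H)} has a greatest lower bound G(Y) in the Krein order, and the set {G(Y) : Y ∈ L(H)} has a maximum element equal to C^# ∘ W(I−Q) ∘ C; (b) for each X ∈ L(H) the family {F_J(X,Y) : Y ∈ L(H)} has a least upper bound H(X) in the Krein order, and the set {H(X) : X ∈ L(H)} has a minimum element equal to C^# ∘ W(I−Q) ∘ C. In particular the max-min equals the min-max. -/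

import Mathlib

/-!
Write `Φ(A) = A^# W A`. Since `range Q = range B₊ ⊕ range B₋` orthogonally and both ranges are
closed, `QC = B₊X₀ + B₋Y₀` for some bounded `X₀, Y₀`. Then
`B₊X + B₋Y − C = B₊(X − X₀) + B₋(Y − Y₀) − (I − Q)C`, and the three summands have mutually
`W`-orthogonal ranges: the first two by hypothesis, and `range Q` against `ker Q` because
`WQ = Q^# W`. Hence `F_J(X,Y) = Φ(B₊(X − X₀)) + Φ(B₋(Y − Y₀)) + C^# W(I − Q)C`, where the first
term is Krein-nonnegative and vanishes at `X₀`, the second is Krein-nonpositive and vanishes at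
`Y₀`; the inf-sup problem thus decouples.
-/

open ContinuousLinearMap

/-- The Krein adjoint `T^# = J ∘ T* ∘ J`. -/
noncomputable def kadj {H : Type*} [NormedAddCommGroup H] [InnerProductSpace ℂ H]
    [CompleteSpace H] (J T : H →L[ℂ] H) : H →L[ℂ] H := J ∘L adjoint T ∘L J

/-- The Krein order: `S ≤ T` iff `J ∘ (T - S)` is a positive operator. -/
def kLE {H : Type*} [NormedAddCommGroup H] [InnerProductSpace ℂ H]
    [CompleteSpace H] (J S T : H →L[ℂ] H) : Prop := (J ∘L (T - S)).IsPositive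

/-- `F_J(X,Y) = (B₊X + B₋Y − C)^# ∘ W ∘ (B₊X + B₋Y − C)`. -/
noncomputable def FJ {H : Type*} [NormedAddCommGroup H] [InnerProductSpace ℂ H]
    [CompleteSpace H] (J W Bp Bm C : H →L[ℂ] H) (X Y : H →L[ℂ] H) : H →L[ℂ] H :=
  kadj J (Bp ∘L X + Bm ∘L Y - C) ∘L (W ∘L (Bp ∘L X + Bm ∘L Y - C))

theorem Submodule.sub_starProjection_mem_of_mem_sup {𝕜 F : Type*} [RCLike 𝕜]
    [NormedAddCommGroup F] [InnerProductSpace 𝕜 F] {U V : Submodule 𝕜 F}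
    [U.HasOrthogonalProjection] (hUV : U ⟂ V) {v : F} (hv : v ∈ U ⊔ V) :
    v - U.starProjection v ∈ V := by
  obtain ⟨u, hu, w, hw, rfl⟩ := Submodule.mem_sup.1 hv
  rw [map_add, Submodule.starProjection_eq_self_iff.2 hu,
    (U.starProjection_apply_eq_zero_iff).2 (hUV.symm.le hw)]
  simpa using hw

section Factorization

variable {𝕜 E F G : Type*} [RCLike 𝕜]
  [NormedAddCommGroup E] [InnerProductSpace 𝕜 E] [CompleteSpace E]
  [NormedAddCommGroup F] [InnerProductSpace 𝕜 F] [CompleteSpace F]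
  [NormedAddCommGroup G] [NormedSpace 𝕜 G]

-- `T` restricted to `(ker T)ᗮ` is an isomorphism onto its closed range.
theorem exists_comp_eq_of_range_le (T : E →L[𝕜] F) (A : G →L[𝕜] F)
    (hT : IsClosed (Set.range T)) (hA : A.range ≤ T.range) : ∃ X : G →L[𝕜] E, T ∘L X = A := by
  have : CompleteSpace T.ker := T.isClosed_ker.completeSpace_coe
  set f := T ∘L T.kerᗮ.subtypeL
  have hf_inj : Function.Injective f := by
    refine (injective_iff_map_eq_zero f).2 fun ⟨x, hx⟩ hfx ↦ ?_
    have : x ∈ T.ker ⊓ T.kerᗮ := ⟨hfx, hx⟩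
    simpa [Submodule.inf_orthogonal_eq_bot] using this
  have hf_range : f.range = T.range := by
    refine le_antisymm (LinearMap.range_comp_le_range _ _) ?_
    rintro _ ⟨x, rfl⟩
    obtain ⟨y, hy, z, hz, rfl⟩ := T.ker.exists_add_mem_mem_orthogonal x
    exact ⟨⟨z, hz⟩, by simp [f, show T y = 0 from hy]⟩
  have hf_closed : IsClosed (Set.range f) := by
    have := congrArg SetLike.coe hf_range
    rw [LinearMap.coe_range, LinearMap.coe_range, coe_coe, coe_coe] at this
    rwa [this]
  set e := f.equivRange hf_inj hf_closed
  refine ⟨T.kerᗮ.subtypeL ∘L (e.symm : f.range →L[𝕜] _) ∘L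
    A.codRestrict f.range fun x ↦ hf_range ▸ hA ⟨x, rfl⟩, ?_⟩
  ext x
  exact congrArg Subtype.val (e.apply_symm_apply _)

theorem exists_comp_add_comp_eq_of_range_le {S T : E →L[𝕜] F} (A : G →L[𝕜] F)
    (hS : IsClosed (Set.range S)) (hT : IsClosed (Set.range T)) (hST : S.range ⟂ T.range)
    (hA : A.range ≤ S.range ⊔ T.range) : ∃ X Y : G →L[𝕜] E, S ∘L X + T ∘L Y = A := by
  have hS' : IsClosed (S.range : Set F) := by rwa [LinearMap.coe_range, coe_coe]
  have := hS'.completeSpace_coe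
  obtain ⟨X, hX⟩ := exists_comp_eq_of_range_le S (S.range.starProjection ∘L A) hS
    (by rintro _ ⟨x, rfl⟩; exact S.range.starProjection_apply_mem _)
  obtain ⟨Y, hY⟩ := exists_comp_eq_of_range_le T (A - S.range.starProjection ∘L A) hT
    (by rintro _ ⟨x, rfl⟩; exact Submodule.sub_starProjection_mem_of_mem_sup hST (hA ⟨x, rfl⟩))
  exact ⟨X, Y, by rw [hX, hY, add_sub_cancel]⟩

end Factorization

-- `P (T - S)` plays the role of `S ≤ T`.
theorem saddle_of_eq_add_add {α β E : Type*} [AddCommGroup E] (P : E → Prop)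
    {F : α → β → E} {a : α → E} {b : β → E} {K : E} (hF : ∀ x y, F x y = a x + b y + K)
    (ha : ∀ x, P (a x)) (hb : ∀ y, P (-b y)) (x₀ : α) (hx₀ : a x₀ = 0) (y₀ : β)
    (hy₀ : b y₀ = 0) :
    (∃ G : β → E,
      (∀ y, (∀ x, P (F x y - G y)) ∧ ∀ T, (∀ x, P (F x y - T)) → P (G y - T)) ∧
      (∃ y₀, G y₀ = K) ∧ ∀ y, P (K - G y)) ∧
    (∃ M : α → E,
      (∀ x, (∀ y, P (M x - F x y)) ∧ ∀ T, (∀ y, P (T - F x y)) → P (T - M x)) ∧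
      (∃ x₀, M x₀ = K) ∧ ∀ x, P (M x - K)) := by
  refine ⟨⟨fun y ↦ b y + K, fun y ↦ ⟨fun x ↦ ?_, fun T hT ↦ ?_⟩, ⟨y₀, by simp [hy₀]⟩, fun y ↦ ?_⟩,
    ⟨fun x ↦ a x + K, fun x ↦ ⟨fun y ↦ ?_, fun T hT ↦ ?_⟩, ⟨x₀, by simp [hx₀]⟩, fun x ↦ ?_⟩⟩
  · simpa [hF, add_assoc] using ha x
  · simpa [hF, hx₀] using hT x₀
  · simpa using hb y
  · simpa [hF, add_assoc] using hb y
  · simpa [hF, hy₀] using hT y₀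
  · simpa using ha x

noncomputable def kconj {H : Type*} [NormedAddCommGroup H] [InnerProductSpace ℂ H]
    [CompleteSpace H] (J W A : H →L[ℂ] H) : H →L[ℂ] H :=
  kadj J A ∘L (W ∘L A)

theorem ContinuousLinearMap.comp_comp_cancel {R M : Type*} [Semiring R] [TopologicalSpace M]
    [AddCommMonoid M] [Module R M] {J : M →L[R] M} (hJ2 : J ∘L J = 1) (T : M →L[R] M) :
    J ∘L (J ∘L T) = T := by
  rw [← comp_assoc, hJ2]
  rfl

open scoped InnerProductSpace

section Krein

variable {H : Type*} [NormedAddCommGroup H] [InnerProductSpace ℂ H] [CompleteSpace H]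
  {J W : H →L[ℂ] H}

theorem kadj_add (A B : H →L[ℂ] H) : kadj J (A + B) = kadj J A + kadj J B := by
  simp [kadj, comp_add, add_comp]

theorem kadj_neg (A : H →L[ℂ] H) : kadj J (-A) = -kadj J A := by
  simp [kadj]

theorem kadj_sub (A B : H →L[ℂ] H) : kadj J (A - B) = kadj J A - kadj J B := by
  simp [kadj, comp_sub, sub_comp]

theorem kadj_one (hJ2 : J ∘L J = 1) : kadj J 1 = 1 := by
  simp only [kadj, adjoint_one]
  exact hJ2

theorem kadj_comp (hJ2 : J ∘L J = 1) (A B : H →L[ℂ] H) :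
    kadj J (A ∘L B) = kadj J B ∘L kadj J A := by
  simp only [kadj, adjoint_comp, comp_assoc, comp_comp_cancel hJ2]

theorem isSelfAdjoint_comp_of_kadj_eq (hJ : IsSelfAdjoint J) (hJ2 : J ∘L J = 1)
    (hW : kadj J W = W) : IsSelfAdjoint (J ∘L W) := by
  rw [isSelfAdjoint_iff', adjoint_comp, hJ.adjoint_eq]
  conv_rhs => rw [← hW, kadj, comp_comp_cancel hJ2]

theorem comp_kconj (hJ2 : J ∘L J = 1) (A : H →L[ℂ] H) :
    J ∘L kconj J W A = adjoint A ∘L ((J ∘L W) ∘L A) := by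
  simp only [kconj, kadj, comp_assoc, comp_comp_cancel hJ2]

theorem kadj_comp_comp_eq_zero {A B : H →L[ℂ] H}
    (h : ∀ x y, ⟪(J ∘L W) (A x), B y⟫_ℂ = 0) : kadj J B ∘L (W ∘L A) = 0 := by
  ext x
  have : adjoint B ((J ∘L W) (A x)) = 0 :=
    ext_inner_right ℂ fun y ↦ by rw [adjoint_inner_left, h, inner_zero_left]
  simp only [kadj, comp_apply, zero_apply] at this ⊢
  rw [this, map_zero]

theorem kconj_add_of_inner_eq_zero (hJW : IsSelfAdjoint (J ∘L W)) {A B : H →L[ℂ] H}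
    (h : ∀ x y, ⟪(J ∘L W) (A x), B y⟫_ℂ = 0) :
    kconj J W (A + B) = kconj J W A + kconj J W B := by
  have hBA : ∀ x y, ⟪(J ∘L W) (B x), A y⟫_ℂ = 0 := fun x y ↦ by
    have hsymm := hJW.isSymmetric (A y) (B x)
    rw [coe_coe] at hsymm
    rw [← inner_conj_symm, ← hsymm, h, map_zero]
  simp only [kconj, kadj_add, add_comp, comp_add, kadj_comp_comp_eq_zero h,
    kadj_comp_comp_eq_zero hBA]
  abel

theorem kconj_neg (A : H →L[ℂ] H) : kconj J W (-A) = kconj J W A := by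
  simp [kconj, kadj_neg]

theorem isPositive_comp_kconj (hJ2 : J ∘L J = 1) (hJW : IsSelfAdjoint (J ∘L W))
    {A : H →L[ℂ] H} (h : ∀ x, 0 ≤ RCLike.re ⟪(J ∘L W) (A x), A x⟫_ℂ) :
    (J ∘L kconj J W A).IsPositive := by
  rw [comp_kconj hJ2, isPositive_def']
  refine ⟨hJW.adjoint_conj A, fun x ↦ ?_⟩
  simpa [reApplyInnerSelf, adjoint_inner_left] using h x

theorem isPositive_comp_neg_kconj (hJ2 : J ∘L J = 1) (hJW : IsSelfAdjoint (J ∘L W))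
    {A : H →L[ℂ] H} (h : ∀ x, RCLike.re ⟪(J ∘L W) (A x), A x⟫_ℂ ≤ 0) :
    (J ∘L (-kconj J W A)).IsPositive := by
  have := isPositive_comp_kconj (W := -W) hJ2 (by simpa using hJW.neg) (A := A)
    (fun x ↦ by simpa using h x)
  simpa [kconj] using this

theorem inner_comp_apply_eq_zero_of_mem_range_of_mem_ker (hJ2 : J ∘L J = 1) {Q : H →L[ℂ] H}
    (hWQ : W ∘L Q = kadj J Q ∘L W) {u v : H} (hu : u ∈ Q.range) (hv : v ∈ Q.ker) :
    ⟪(J ∘L W) u, v⟫_ℂ = 0 := by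
  obtain ⟨u, rfl⟩ := hu
  have hJWQ : J ∘L W ∘L Q = adjoint Q ∘L (J ∘L W) := by
    simp only [hWQ, kadj, comp_assoc, comp_comp_cancel hJ2]
  have := congrArg (fun T ↦ T u) hJWQ
  simp only [comp_apply, coe_coe] at this ⊢
  rw [this, adjoint_inner_left, show Q v = 0 from hv, inner_zero_right]

theorem kconj_one_sub_comp (hJ2 : J ∘L J = 1) {Q : H →L[ℂ] H} (hQ : Q ∘L Q = Q)
    (hWQ : W ∘L Q = kadj J Q ∘L W) (C : H →L[ℂ] H) :
    kconj J W ((1 - Q) ∘L C) = kadj J C ∘L ((W ∘L (1 - Q)) ∘L C) := by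
  have hW : kadj J (1 - Q) ∘L W = W ∘L (1 - Q) := by
    rw [kadj_sub, kadj_one hJ2, sub_comp, ← hWQ, comp_sub]
    rfl
  have hproj : (1 - Q) ∘L (1 - Q) = 1 - Q := (IsIdempotentElem.one_sub hQ).eq
  rw [kconj, kadj_comp hJ2, comp_assoc, ← comp_assoc (kadj J (1 - Q)), hW, comp_assoc W,
    ← comp_assoc (1 - Q), hproj, comp_assoc]

theorem FJ_eq_kconj_add_kconj_add (hJ2 : J ∘L J = 1) (hJW : IsSelfAdjoint (J ∘L W))
    {Bp Bm Q C X₀ Y₀ : H →L[ℂ] H} (hQ : Q ∘L Q = Q) (hWQ : W ∘L Q = kadj J Q ∘L W)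
    (hWorth : ∀ x y, ⟪(J ∘L W) (Bp x), Bm y⟫_ℂ = 0) (hBQ : Bp.range ⊔ Bm.range ≤ Q.range)
    (h₀ : Bp ∘L X₀ + Bm ∘L Y₀ = Q ∘L C) (X Y : H →L[ℂ] H) :
    FJ J W Bp Bm C X Y = kconj J W (Bp ∘L (X - X₀)) + kconj J W (Bm ∘L (Y - Y₀)) +
      kadj J C ∘L ((W ∘L (1 - Q)) ∘L C) := by
  have hsplit : Bp ∘L X + Bm ∘L Y - C =
      (Bp ∘L (X - X₀) + Bm ∘L (Y - Y₀)) + -((1 - Q) ∘L C) := by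
    rw [comp_sub, comp_sub, sub_comp, ← h₀]
    change _ = _ + -(C - (Bp ∘L X₀ + Bm ∘L Y₀))
    abel
  have hrange : ∀ x, (Bp ∘L (X - X₀) + Bm ∘L (Y - Y₀)) x ∈ Q.range := fun x ↦
    hBQ (Submodule.add_mem_sup ⟨_, rfl⟩ ⟨_, rfl⟩)
  have hker : ∀ y, ((1 - Q) ∘L C) y ∈ Q.ker := fun y ↦ by
    simpa [sub_eq_zero] using (congrArg (fun T ↦ T (C y)) hQ).symm
  rw [FJ, ← kconj, hsplit, kconj_add_of_inner_eq_zero hJW, kconj_add_of_inner_eq_zero hJW,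
    kconj_neg, kconj_one_sub_comp hJ2 hQ hWQ]
  · exact fun x y ↦ hWorth _ _
  · intro x y
    rw [neg_apply, inner_neg_right,
      inner_comp_apply_eq_zero_of_mem_range_of_mem_ker hJ2 hWQ (hrange x) (hker y), neg_zero]

end Krein

theorem stmt12_general {H : Type*} [NormedAddCommGroup H] [InnerProductSpace ℂ H] [CompleteSpace H]
    (J : H →L[ℂ] H) (hJ : IsSelfAdjoint J) (hJ2 : J ∘L J = 1)
    (W : H →L[ℂ] H) (hW : kadj J W = W)
    (B Bp Bm : H →L[ℂ] H)
    (hBp : IsClosed (Set.range ⇑Bp)) (hBm : IsClosed (Set.range ⇑Bm))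
    (hBppos : ∀ x : H, 0 ≤ (inner ℂ ((J ∘L W) (Bp x)) (Bp x) : ℂ).re)
    (hBmneg : ∀ x : H, (inner ℂ ((J ∘L W) (Bm x)) (Bm x) : ℂ).re ≤ 0)
    (horth : ∀ x y : H, (inner ℂ (Bp x) (Bm y) : ℂ) = 0)
    (hWorth : ∀ x y : H, (inner ℂ ((J ∘L W) (Bp x)) (Bm y) : ℂ) = 0)
    (hran : LinearMap.range (B : H →ₗ[ℂ] H) = LinearMap.range (Bp : H →ₗ[ℂ] H) ⊔ LinearMap.range (Bm : H →ₗ[ℂ] H))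
    (Q : H →L[ℂ] H) (hQ : Q ∘L Q = Q)
    (hQran : LinearMap.range (Q : H →ₗ[ℂ] H) = LinearMap.range (B : H →ₗ[ℂ] H))
    (hWQ : W ∘L Q = kadj J Q ∘L W) :
    ∀ C : H →L[ℂ] H,
      (∃ G : (H →L[ℂ] H) → (H →L[ℂ] H),
        (∀ Y : H →L[ℂ] H,
          (∀ X : H →L[ℂ] H, kLE J (G Y) (FJ J W Bp Bm C X Y)) ∧
          (∀ T : H →L[ℂ] H,
            (∀ X : H →L[ℂ] H, kLE J T (FJ J W Bp Bm C X Y)) → kLE J T (G Y))) ∧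
        (∃ Y₀ : H →L[ℂ] H, G Y₀ = kadj J C ∘L ((W ∘L (1 - Q)) ∘L C)) ∧
        (∀ Y : H →L[ℂ] H, kLE J (G Y) (kadj J C ∘L ((W ∘L (1 - Q)) ∘L C)))) ∧
      (∃ M : (H →L[ℂ] H) → (H →L[ℂ] H),
        (∀ X : H →L[ℂ] H,
          (∀ Y : H →L[ℂ] H, kLE J (FJ J W Bp Bm C X Y) (M X)) ∧
          (∀ T : H →L[ℂ] H,
            (∀ Y : H →L[ℂ] H, kLE J (FJ J W Bp Bm C X Y) T) → kLE J (M X) T)) ∧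
        (∃ X₀ : H →L[ℂ] H, M X₀ = kadj J C ∘L ((W ∘L (1 - Q)) ∘L C)) ∧
        (∀ X : H →L[ℂ] H, kLE J (kadj J C ∘L ((W ∘L (1 - Q)) ∘L C)) (M X))) := by
  intro C
  have hJW := isSelfAdjoint_comp_of_kadj_eq hJ hJ2 hW
  have hQB : Q.range = Bp.range ⊔ Bm.range := hQran.trans hran
  obtain ⟨X₀, Y₀, h₀⟩ := exists_comp_add_comp_eq_of_range_le (Q ∘L C) hBp hBm
    (by rintro _ ⟨x, rfl⟩ _ ⟨y, rfl⟩; rw [inner_eq_zero_symm]; exact horth x y)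
    (hQB ▸ LinearMap.range_comp_le_range _ _)
  exact saddle_of_eq_add_add (fun A ↦ (J ∘L A).IsPositive)
    (FJ_eq_kconj_add_kconj_add hJ2 hJW hQ hWQ hWorth hQB.ge h₀)
    (fun X ↦ isPositive_comp_kconj hJ2 hJW fun x ↦ hBppos _)
    (fun Y ↦ isPositive_comp_neg_kconj hJ2 hJW fun y ↦ hBmneg _)
    X₀ (by simp [kconj, kadj]) Y₀ (by simp [kconj, kadj])

/-- if `W` is `range B`-complementable, witnessed by the projection `Q`,
then for every `C` the max-min and the min-max of `F_J(X,Y)` exist and both equal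
`C^# ∘ W(I−Q) ∘ C`. -/
theorem stmt12 {H : Type*} [NormedAddCommGroup H] [InnerProductSpace ℂ H] [CompleteSpace H]
    (J : H →L[ℂ] H) (hJ : IsSelfAdjoint J) (hJ2 : J ∘L J = 1)
    (W : H →L[ℂ] H) (hW : kadj J W = W)
    (B Bp Bm : H →L[ℂ] H) (hB : IsClosed (Set.range ⇑B))
    (hBsum : B = Bp + Bm)
    (hBp : IsClosed (Set.range ⇑Bp)) (hBm : IsClosed (Set.range ⇑Bm))
    (hBppos : ∀ x : H, 0 ≤ (inner ℂ ((J ∘L W) (Bp x)) (Bp x) : ℂ).re)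
    (hBmneg : ∀ x : H, (inner ℂ ((J ∘L W) (Bm x)) (Bm x) : ℂ).re ≤ 0)
    (horth : ∀ x y : H, (inner ℂ (Bp x) (Bm y) : ℂ) = 0)
    (hWorth : ∀ x y : H, (inner ℂ ((J ∘L W) (Bp x)) (Bm y) : ℂ) = 0)
    (hran : LinearMap.range (B : H →ₗ[ℂ] H) = LinearMap.range (Bp : H →ₗ[ℂ] H) ⊔ LinearMap.range (Bm : H →ₗ[ℂ] H))
    (Q : H →L[ℂ] H) (hQ : Q ∘L Q = Q)
    (hQran : LinearMap.range (Q : H →ₗ[ℂ] H) = LinearMap.range (B : H →ₗ[ℂ] H))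
    (hWQ : W ∘L Q = kadj J Q ∘L W) :
    ∀ C : H →L[ℂ] H,
      (∃ G : (H →L[ℂ] H) → (H →L[ℂ] H),
        (∀ Y : H →L[ℂ] H,
          (∀ X : H →L[ℂ] H, kLE J (G Y) (FJ J W Bp Bm C X Y)) ∧
          (∀ T : H →L[ℂ] H,
            (∀ X : H →L[ℂ] H, kLE J T (FJ J W Bp Bm C X Y)) → kLE J T (G Y))) ∧
        (∃ Y₀ : H →L[ℂ] H, G Y₀ = kadj J C ∘L ((W ∘L (1 - Q)) ∘L C)) ∧
        (∀ Y : H →L[ℂ] H, kLE J (G Y) (kadj J C ∘L ((W ∘L (1 - Q)) ∘L C)))) ∧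
      (∃ M : (H →L[ℂ] H) → (H →L[ℂ] H),
        (∀ X : H →L[ℂ] H,
          (∀ Y : H →L[ℂ] H, kLE J (FJ J W Bp Bm C X Y) (M X)) ∧
          (∀ T : H →L[ℂ] H,
            (∀ Y : H →L[ℂ] H, kLE J (FJ J W Bp Bm C X Y) T) → kLE J (M X) T)) ∧
        (∃ X₀ : H →L[ℂ] H, M X₀ = kadj J C ∘L ((W ∘L (1 - Q)) ∘L C)) ∧
        (∀ X : H →L[ℂ] H, kLE J (kadj J C ∘L ((W ∘L (1 - Q)) ∘L C)) (M X))) :=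
  stmt12_general J hJ hJ2 W hW B Bp Bm hBp hBm hBppos hBmneg horth hWorth hran Q hQ hQran hWQ
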